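/- Let C be a binary linear code in 𝔽₂ⁿ that is not even (contains a codeword of odd weight) and has minimum distance at least 2. Then the bipartite double of the coset graph Γ(C) is isomorphic to the coset graph Γ(C ∩ Eₙ), where Eₙ is the set of even-weight vectors; the isomorphism sends x + (C ∩ Eₙ) to (x+C, wt(x) mod 2). -/

import Mathlib

/-- The standard basis vector `e_i` of `𝔽₂ⁿ`. -/
def stdBasis (n : ℕ) (i : Fin n) : Fin n → ZMod 2 :=
  fun k => if k = i then 1 else 0

lemma stdBasis_add_self (n : ℕ) (i : Fin n) : stdBasis n i + stdBasis n i = 0 := by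
  funext k; exact CharTwo.add_self_eq_zero _

/-- The coset graph `Γ(C)` of a binary linear code `C ≤ 𝔽₂ⁿ`: vertices are the
cosets of `C`, with `x + C` adjacent to `x + e_i + C` (when distinct). -/
def cosetGraph {n : ℕ} (C : Submodule (ZMod 2) (Fin n → ZMod 2)) :
    SimpleGraph ((Fin n → ZMod 2) ⧸ C) where
  Adj a b := a ≠ b ∧ ∃ i : Fin n, b = a + Submodule.Quotient.mk (stdBasis n i)
  symm := ⟨by
    rintro a b ⟨hne, i, rfl⟩
    refine ⟨hne.symm, i, ?_⟩
    rw [add_assoc, ← Submodule.Quotient.mk_add, stdBasis_add_self]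
    simp⟩
  loopless := ⟨fun a h => h.1 rfl⟩

/-- `C` has minimum distance at least `d`: every nonzero codeword has
Hamming weight at least `d`. -/
def MinDistAtLeast {n : ℕ} (C : Submodule (ZMod 2) (Fin n → ZMod 2)) (d : ℕ) : Prop :=
  ∀ c ∈ C, c ≠ 0 → d ≤ hammingNorm c

lemma zmod2_cases (c : ZMod 2) : c = 0 ∨ c = 1 := by revert c; decide

lemma cast_hammingNorm {n : ℕ} (x : Fin n → ZMod 2) :
    (hammingNorm x : ZMod 2) = ∑ i, x i := by
  classical
  rw [hammingNorm, Finset.card_filter]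
  push_cast
  refine Finset.sum_congr rfl fun i _ => ?_
  rcases zmod2_cases (x i) with h | h <;> simp [h]

lemma even_hammingNorm_iff {n : ℕ} (x : Fin n → ZMod 2) :
    Even (hammingNorm x) ↔ ∑ i, x i = 0 := by
  rw [← cast_hammingNorm, ZMod.natCast_eq_zero_iff]; exact even_iff_two_dvd

/-- The even-weight vectors form a binary linear code `Eₙ ≤ 𝔽₂ⁿ`. -/
def evenSubmodule (n : ℕ) : Submodule (ZMod 2) (Fin n → ZMod 2) where
  carrier := {x | Even (hammingNorm x)}
  zero_mem' := by simp
  add_mem' := by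
    intro a b ha hb
    simp only [Set.mem_setOf_eq, even_hammingNorm_iff] at *
    simp [Finset.sum_add_distrib, ha, hb]
  smul_mem' := by
    intro c x hx
    rcases zmod2_cases c with h | h <;> simp_all

/-- The bipartite double of a graph. -/
def bipDouble {V : Type*} (G : SimpleGraph V) : SimpleGraph (V × ZMod 2) where
  Adj p q := G.Adj p.1 q.1 ∧ p.2 ≠ q.2
  symm := ⟨fun p q h => ⟨h.1.symm, h.2.symm⟩⟩
  loopless := ⟨fun p h => h.2 rfl⟩

/-!
Write `V = 𝔽₂ⁿ` and `p : V → 𝔽₂` for the coordinate sum, so `p x = wt(x) mod 2`. The linear map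
`x ↦ (x + C, p x)` has kernel `C ∩ Eₙ`, and it is onto because an odd codeword `c` satisfies
`c ↦ (0, 1)`; hence it induces a linear isomorphism `V/(C ∩ Eₙ) ≃ V/C × 𝔽₂` sending `e_i` to
`(e_i + C, 1)`. Both graphs are Cayley graphs of their groups — for `Γ(C)` and `Γ(C ∩ Eₙ)` this
needs `e_i ∉ C`, i.e. minimum distance at least 2 — and the isomorphism matches their
connection sets.
-/

section CayleyIso

variable {A B ι : Type*} [AddGroup A] [AddGroup B]

def AddEquiv.toGraphIso (e : A ≃+ B) {G : SimpleGraph A} {H : SimpleGraph B} (g : ι → A)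
    (h : ι → B) (hG : ∀ a b, G.Adj a b ↔ ∃ i, b = a + g i)
    (hH : ∀ u v, H.Adj u v ↔ ∃ i, v = u + h i) (he : ∀ i, e (g i) = h i) : G ≃g H where
  toEquiv := e.toEquiv
  map_rel_iff' {a b} := by
    change H.Adj (e a) (e b) ↔ G.Adj a b
    simp only [hH, hG, ← he, ← map_add, e.injective.eq_iff]

lemma bipDouble_adj_iff_exists_eq_add {G : SimpleGraph A} (g : ι → A)
    (hG : ∀ a b, G.Adj a b ↔ ∃ i, b = a + g i) (p q : A × ZMod 2) :
    (bipDouble G).Adj p q ↔ ∃ i, q = p + (g i, 1) := by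
  have hne : p.2 ≠ q.2 ↔ q.2 = p.2 + 1 := by
    generalize p.2 = s; generalize q.2 = t; revert s t; decide
  simp only [bipDouble, hG, hne, Prod.ext_iff, Prod.fst_add, Prod.snd_add, exists_and_right]

end CayleyIso

variable {n : ℕ}

def parity (n : ℕ) : (Fin n → ZMod 2) →ₗ[ZMod 2] ZMod 2 where
  toFun x := ∑ i, x i
  map_add' x y := by simp [Finset.sum_add_distrib]
  map_smul' c x := by simp [Finset.mul_sum]

lemma parity_apply (x : Fin n → ZMod 2) : parity n x = ∑ i, x i := rfl

lemma parity_eq_hammingNorm (x : Fin n → ZMod 2) : parity n x = hammingNorm x :=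
  (cast_hammingNorm x).symm

lemma parity_eq_one_iff (x : Fin n → ZMod 2) : parity n x = 1 ↔ ¬ Even (hammingNorm x) := by
  rw [parity_eq_hammingNorm, ZMod.natCast_eq_one_iff_odd, Nat.not_even_iff_odd]

lemma parity_stdBasis (i : Fin n) : parity n (stdBasis n i) = 1 := by
  simp [parity_apply, stdBasis]

lemma ker_parity : LinearMap.ker (parity n) = evenSubmodule n := by
  ext x
  exact (even_hammingNorm_iff x).symm

lemma hammingNorm_stdBasis (i : Fin n) : hammingNorm (stdBasis n i) = 1 := by
  rw [hammingNorm, Finset.card_eq_one]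
  exact ⟨i, by ext k; simp [stdBasis]⟩

lemma MinDistAtLeast.mono {C C' : Submodule (ZMod 2) (Fin n → ZMod 2)} {d : ℕ}
    (hd : MinDistAtLeast C d) (h : C' ≤ C) : MinDistAtLeast C' d :=
  fun c hc => hd c (h hc)

lemma MinDistAtLeast.stdBasis_notMem {C : Submodule (ZMod 2) (Fin n → ZMod 2)}
    (hd : MinDistAtLeast C 2) (i : Fin n) : stdBasis n i ∉ C := by
  intro hi
  have h1 := hammingNorm_stdBasis i
  have h2 := hd _ hi (hammingNorm_pos_iff.mp (by omega))
  omega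

lemma cosetGraph_adj_iff {C : Submodule (ZMod 2) (Fin n → ZMod 2)} (hd : MinDistAtLeast C 2)
    (a b : (Fin n → ZMod 2) ⧸ C) :
    (cosetGraph C).Adj a b ↔ ∃ i, b = a + Submodule.Quotient.mk (stdBasis n i) := by
  refine ⟨And.right, fun ⟨i, hb⟩ => ⟨fun hab => hd.stdBasis_notMem i ?_, i, hb⟩⟩
  rwa [← hab, left_eq_add, Submodule.Quotient.mk_eq_zero] at hb

section ParityEquiv

variable (C : Submodule (ZMod 2) (Fin n → ZMod 2))

lemma ker_mkQ_prod_parity : LinearMap.ker (C.mkQ.prod (parity n)) = C ⊓ evenSubmodule n := by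
  rw [LinearMap.ker_prod, Submodule.ker_mkQ, ker_parity]

variable {C}

lemma surjective_mkQ_prod_parity {c : Fin n → ZMod 2} (hc : c ∈ C) (hc1 : parity n c = 1) :
    Function.Surjective (C.mkQ.prod (parity n)) := by
  rintro ⟨q, b⟩
  obtain ⟨x, rfl⟩ := Submodule.Quotient.mk_surjective C q
  refine ⟨x + (b - parity n x) • c, ?_⟩
  simp [(Submodule.Quotient.mk_eq_zero C).mpr hc, hc1]

noncomputable def parityEquiv {c : Fin n → ZMod 2} (hc : c ∈ C) (hc1 : parity n c = 1) :
    ((Fin n → ZMod 2) ⧸ C ⊓ evenSubmodule n) ≃ₗ[ZMod 2] ((Fin n → ZMod 2) ⧸ C) × ZMod 2 :=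
  (Submodule.quotEquivOfEq _ _ (ker_mkQ_prod_parity C).symm).trans
    ((C.mkQ.prod (parity n)).quotKerEquivOfSurjective (surjective_mkQ_prod_parity hc hc1))

lemma parityEquiv_mk {c : Fin n → ZMod 2} (hc : c ∈ C) (hc1 : parity n c = 1)
    (x : Fin n → ZMod 2) :
    parityEquiv hc hc1 (Submodule.Quotient.mk x) = (Submodule.Quotient.mk x, parity n x) := by
  simp [parityEquiv, Submodule.quotEquivOfEq_mk, LinearMap.quotKerEquivOfSurjective_apply_mk]

end ParityEquiv

/-- If `C` is a non-even binary linear code with minimum distance at least 2,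
then the bipartite double of `Γ(C)` is isomorphic to `Γ(C ∩ Eₙ)`, via
`x + (C ∩ Eₙ) ↦ (x + C, wt(x) mod 2)`. -/
theorem bipDouble_cosetGraph_iso {n : ℕ}
    (C : Submodule (ZMod 2) (Fin n → ZMod 2)) (hd : MinDistAtLeast C 2)
    (hodd : ∃ c ∈ C, ¬ Even (hammingNorm c)) :
    ∃ φ : cosetGraph (C ⊓ evenSubmodule n) ≃g bipDouble (cosetGraph C),
      ∀ x : Fin n → ZMod 2,
        φ (Submodule.Quotient.mk x) =
          (Submodule.Quotient.mk x, (hammingNorm x : ZMod 2)) := by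
  obtain ⟨c, hc, hc_odd⟩ := hodd
  have hc1 : parity n c = 1 := (parity_eq_one_iff c).mpr hc_odd
  let e := parityEquiv hc hc1
  refine ⟨e.toAddEquiv.toGraphIso _ _
    (cosetGraph_adj_iff (hd.mono inf_le_left))
    (bipDouble_adj_iff_exists_eq_add _ (cosetGraph_adj_iff hd))
    (fun i => (parityEquiv_mk hc hc1 _).trans (by rw [parity_stdBasis])), fun x => ?_⟩
  exact (parityEquiv_mk hc hc1 x).trans (by rw [parity_eq_hammingNorm])
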